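/- arXiv:0708.2557 — 2 statements merged into one kernel-verified Lean document; each statement's English description precedes it below -/
import Mathlib

section
/- Entropy-Splitting Lemma (non-smooth case, m = 2): Let X₁, X₂ and Z be random variables on a finite probability space such that ∑_z max_{x₁,x₂} P[X₁ = x₁, X₂ = x₂, Z = z] ≤ 2^{−α}. Define the random variable V with values in {1,2} by: V = 1 if P[X₁ = x₁ | Z = z] ≥ 2^{−α/2} (where (x₁, z) are the realized values), and V = 2 otherwise. Then for each j ∈ {1,2} and i ≠ j it holds that ∑_z max_{x_i} P[X_i = x_i, V = j, Z = z] ≤ 2^{−α/2}. -/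
/-!
Call `x₁` heavy for `z` when `P[X₁ = x₁, Z = z] ≥ t · P[Z = z]`, with `t = 2^{-α/2}`.
On `V = 1` the realized `x₁` is light, so `P[X₁ = x₁, V = 1, Z = z] < t · P[Z = z]`, and summing
over `z` gives at most `t`. On `V = 0` the realized `x₁` is heavy; by Markov's inequality at most
`1/t` values are heavy for each `z`, so `P[X₂ = x₂, V = 0, Z = z]` is a sum of at most `1/t` terms,
each bounded by `max_{x₁,x₂} P[X₁ = x₁, X₂ = x₂, Z = z]`, and summing over `z` gives at most
`2^{-α} / t = t`.
-/

open Finset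

theorem card_filter_ge_mul_le_sum {ι : Type*} (s : Finset ι) {f : ι → ℝ}
    (hf : ∀ i ∈ s, 0 ≤ f i) (c : ℝ) : #{i ∈ s | c ≤ f i} * c ≤ ∑ i ∈ s, f i :=
  calc (#{i ∈ s | c ≤ f i} : ℝ) * c ≤ ∑ i ∈ s with c ≤ f i, f i := by
        rw [← nsmul_eq_mul]; exact card_nsmul_le_sum _ _ _ fun i hi => (mem_filter.1 hi).2
    _ ≤ ∑ i ∈ s, f i := sum_le_sum_of_subset_of_nonneg (filter_subset _ _) fun i hi _ => hf i hi

section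

variable {Ω 𝒳₁ 𝒳₂ 𝒵 : Type*} [Fintype Ω] [DecidableEq 𝒳₁] [DecidableEq 𝒳₂] [DecidableEq 𝒵]
  {p : Ω → ℝ} {X₁ : Ω → 𝒳₁} {X₂ : Ω → 𝒳₂} {Z : Ω → 𝒵}

theorem sum_filter_mono (hp : ∀ ω, 0 ≤ p ω) {E F : Ω → Prop} [DecidablePred E]
    [DecidablePred F] (h : ∀ ω, E ω → F ω) : ∑ ω with E ω, p ω ≤ ∑ ω with F ω, p ω :=
  sum_le_sum_of_subset_of_nonneg (monotone_filter_right _ fun ω _ => h ω) fun ω _ _ => hp ω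

theorem sum_filter_light_le (hp : ∀ ω, 0 ≤ p ω) {t : ℝ} (ht : 0 ≤ t) {E : Ω → Prop}
    [DecidablePred E]
    (hE : ∀ ω, E ω → ∑ ω' with X₁ ω' = X₁ ω ∧ Z ω' = Z ω, p ω' < t * ∑ ω' with Z ω' = Z ω, p ω')
    (z : 𝒵) (x₁ : 𝒳₁) :
    ∑ ω with X₁ ω = x₁ ∧ E ω ∧ Z ω = z, p ω ≤ t * ∑ ω with Z ω = z, p ω := by
  rcases eq_empty_or_nonempty ({ω | X₁ ω = x₁ ∧ E ω ∧ Z ω = z} : Finset Ω) with h | ⟨ω₀, hω₀⟩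
  · rw [h, sum_empty]
    exact mul_nonneg ht (sum_nonneg fun ω _ => hp ω)
  · obtain ⟨rfl, hE₀, rfl⟩ := (mem_filter.1 hω₀).2
    calc ∑ ω with X₁ ω = X₁ ω₀ ∧ E ω ∧ Z ω = Z ω₀, p ω
        ≤ ∑ ω with X₁ ω = X₁ ω₀ ∧ Z ω = Z ω₀, p ω := sum_filter_mono hp fun ω h => ⟨h.1, h.2.2⟩
      _ ≤ t * ∑ ω with Z ω = Z ω₀, p ω := (hE ω₀ hE₀).le

variable [Fintype 𝒳₁]

theorem sum_fiberwise_filter (p : Ω → ℝ) (X₁ : Ω → 𝒳₁) (E : Ω → Prop) [DecidablePred E] :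
    ∑ x₁, ∑ ω with X₁ ω = x₁ ∧ E ω, p ω = ∑ ω with E ω, p ω := by
  rw [← sum_fiberwise _ X₁ p]
  simp only [filter_filter, and_comm]

theorem card_heavy_mul_le (hp : ∀ ω, 0 ≤ p ω) (t : ℝ) (z : 𝒵) :
    #{x₁ | t * ∑ ω with Z ω = z, p ω ≤ ∑ ω with X₁ ω = x₁ ∧ Z ω = z, p ω}
        * (t * ∑ ω with Z ω = z, p ω) ≤ ∑ ω with Z ω = z, p ω := by
  rw [← sum_fiberwise_filter p X₁]
  exact card_filter_ge_mul_le_sum _ (fun _ _ => sum_nonneg fun ω _ => hp ω) _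

theorem mul_sum_filter_heavy_le (hp : ∀ ω, 0 ≤ p ω) {t M : ℝ} (ht : 0 ≤ t) (hM : 0 ≤ M)
    {E : Ω → Prop} [DecidablePred E]
    (hE : ∀ ω, E ω → t * ∑ ω' with Z ω' = Z ω, p ω' ≤ ∑ ω' with X₁ ω' = X₁ ω ∧ Z ω' = Z ω, p ω')
    (z : 𝒵) (x₂ : 𝒳₂) (hmax : ∀ x₁, ∑ ω with X₁ ω = x₁ ∧ X₂ ω = x₂ ∧ Z ω = z, p ω ≤ M) :
    t * ∑ ω with X₂ ω = x₂ ∧ E ω ∧ Z ω = z, p ω ≤ M := by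
  set H := ({x₁ | t * ∑ ω with Z ω = z, p ω ≤ ∑ ω with X₁ ω = x₁ ∧ Z ω = z, p ω} : Finset 𝒳₁)
  have hsplit : ∑ ω with X₂ ω = x₂ ∧ E ω ∧ Z ω = z, p ω ≤ #H * M := by
    rw [← sum_fiberwise_of_maps_to (t := H) (g := X₁), ← nsmul_eq_mul]
    · refine sum_le_card_nsmul _ _ _ fun x₁ _ => le_trans ?_ (hmax x₁)
      rw [filter_filter]
      exact sum_filter_mono hp fun ω ⟨⟨hx₂, _, hz⟩, hx₁⟩ => ⟨hx₁, hx₂, hz⟩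
    · intro ω hω
      obtain ⟨_, hEω, rfl⟩ := (mem_filter.1 hω).2
      exact mem_filter.2 ⟨mem_univ _, hE ω hEω⟩
  rcases (sum_nonneg fun ω _ => hp ω : 0 ≤ ∑ ω with Z ω = z, p ω).eq_or_lt with hz | hz
  · have hnull : ∑ ω with X₂ ω = x₂ ∧ E ω ∧ Z ω = z, p ω ≤ 0 :=
      hz ▸ sum_filter_mono hp fun ω h => h.2.2
    exact (mul_nonpos_of_nonneg_of_nonpos ht hnull).trans hM
  · have hcard : #H * t ≤ 1 := le_of_mul_le_mul_right
      (by rw [mul_assoc, one_mul]; exact card_heavy_mul_le hp t z) hz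
    calc t * ∑ ω with X₂ ω = x₂ ∧ E ω ∧ Z ω = z, p ω ≤ t * (#H * M) := by gcongr
      _ = (#H * t) * M := by ring
      _ ≤ M := mul_le_of_le_one_left hM hcard

variable [Fintype 𝒵] [Nonempty 𝒳₁]

theorem sum_sup'_light_le (hp : ∀ ω, 0 ≤ p ω) (hsum : ∑ ω, p ω = 1) {t : ℝ} (ht : 0 ≤ t)
    {E : Ω → Prop} [DecidablePred E]
    (hE : ∀ ω, E ω → ∑ ω' with X₁ ω' = X₁ ω ∧ Z ω' = Z ω, p ω' < t * ∑ ω' with Z ω' = Z ω, p ω') :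
    ∑ z, (univ : Finset 𝒳₁).sup' univ_nonempty
      (fun x₁ => ∑ ω with X₁ ω = x₁ ∧ E ω ∧ Z ω = z, p ω) ≤ t :=
  calc _ ≤ ∑ z, t * ∑ ω with Z ω = z, p ω :=
        sum_le_sum fun z _ => sup'_le _ _ fun x₁ _ => sum_filter_light_le hp ht hE z x₁
    _ = t := by rw [← mul_sum, sum_fiberwise univ Z p, hsum, mul_one]

theorem mul_sum_sup'_heavy_le [Fintype 𝒳₂] [Nonempty 𝒳₂] (hp : ∀ ω, 0 ≤ p ω) {t : ℝ}
    (ht : 0 ≤ t) {E : Ω → Prop} [DecidablePred E]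
    (hE : ∀ ω, E ω → t * ∑ ω' with Z ω' = Z ω, p ω' ≤ ∑ ω' with X₁ ω' = X₁ ω ∧ Z ω' = Z ω, p ω') :
    t * ∑ z, (univ : Finset 𝒳₂).sup' univ_nonempty
        (fun x₂ => ∑ ω with X₂ ω = x₂ ∧ E ω ∧ Z ω = z, p ω)
      ≤ ∑ z, (univ : Finset (𝒳₁ × 𝒳₂)).sup' univ_nonempty
        (fun xx => ∑ ω with X₁ ω = xx.1 ∧ X₂ ω = xx.2 ∧ Z ω = z, p ω) := by
  rw [mul_sum]
  refine sum_le_sum fun z _ => ?_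
  set M := (univ : Finset (𝒳₁ × 𝒳₂)).sup' univ_nonempty
    (fun xx => ∑ ω with X₁ ω = xx.1 ∧ X₂ ω = xx.2 ∧ Z ω = z, p ω)
  have hmax : ∀ x₁ x₂, ∑ ω with X₁ ω = x₁ ∧ X₂ ω = x₂ ∧ Z ω = z, p ω ≤ M := fun x₁ x₂ =>
    le_sup' (fun xx : 𝒳₁ × 𝒳₂ => ∑ ω with X₁ ω = xx.1 ∧ X₂ ω = xx.2 ∧ Z ω = z, p ω)
      (mem_univ (x₁, x₂))
  have hM : 0 ≤ M := (sum_nonneg fun ω _ => hp ω).trans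
    (hmax (Classical.arbitrary _) (Classical.arbitrary _))
  obtain ⟨x₂, -, hx₂⟩ := exists_mem_eq_sup' (univ_nonempty (α := 𝒳₂))
    (fun x₂ => ∑ ω with X₂ ω = x₂ ∧ E ω ∧ Z ω = z, p ω)
  rw [hx₂]
  exact mul_sum_filter_heavy_le hp ht hM hE z x₂ fun x₁ => hmax x₁ x₂

end

/-- Entropy-splitting lemma (non-smooth case, `m = 2`): if the pair `(X₁,X₂)` has
min-entropy at least `α` given `Z`, and `V ∈ {0,1}` indicates whether `X₁` is "heavy"
given `Z` (i.e. `P[X₁ = x₁ | Z = z] ≥ 2^{-α/2}` for the realized values), then for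
`j ∈ {0,1}` and `i ≠ j`, the variable `X_i` has min-entropy at least `α/2` jointly
with the event `V = j`, given `Z`. -/
theorem entropy_splitting_two
    {Ω 𝒳₁ 𝒳₂ 𝒵 : Type*} [Fintype Ω] [Fintype 𝒳₁] [Fintype 𝒳₂] [Fintype 𝒵]
    [Nonempty 𝒳₁] [Nonempty 𝒳₂] [DecidableEq 𝒳₁] [DecidableEq 𝒳₂] [DecidableEq 𝒵]
    (p : Ω → ℝ) (hp : ∀ ω, 0 ≤ p ω) (hsum : ∑ ω, p ω = 1)
    (X₁ : Ω → 𝒳₁) (X₂ : Ω → 𝒳₂) (Z : Ω → 𝒵) (α : ℝ)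
    (hα : ∑ z, (univ : Finset (𝒳₁ × 𝒳₂)).sup' univ_nonempty (fun xx =>
        ∑ ω ∈ univ.filter (fun ω => X₁ ω = xx.1 ∧ X₂ ω = xx.2 ∧ Z ω = z), p ω)
        ≤ (2:ℝ) ^ (-α))
    (V : Ω → Fin 2)
    (hV : ∀ ω, V ω = 0 ↔
      (2:ℝ) ^ (-α/2) * (∑ ω' ∈ univ.filter (fun ω' => Z ω' = Z ω), p ω')
        ≤ ∑ ω' ∈ univ.filter (fun ω' => X₁ ω' = X₁ ω ∧ Z ω' = Z ω), p ω') :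
    (∑ z, (univ : Finset 𝒳₂).sup' univ_nonempty (fun x₂ =>
        ∑ ω ∈ univ.filter (fun ω => X₂ ω = x₂ ∧ V ω = 0 ∧ Z ω = z), p ω)
      ≤ (2:ℝ) ^ (-α/2))
    ∧ (∑ z, (univ : Finset 𝒳₁).sup' univ_nonempty (fun x₁ =>
        ∑ ω ∈ univ.filter (fun ω => X₁ ω = x₁ ∧ V ω = 1 ∧ Z ω = z), p ω)
      ≤ (2:ℝ) ^ (-α/2)) := by
  have ht : (0 : ℝ) < 2 ^ (-α/2) := by positivity
  have hsq : (2 : ℝ) ^ (-α) = 2 ^ (-α/2) * 2 ^ (-α/2) := by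
    rw [← Real.rpow_add two_pos]; ring_nf
  have hlight : ∀ ω, V ω = 1 → ∑ ω' with X₁ ω' = X₁ ω ∧ Z ω' = Z ω, p ω'
      < 2 ^ (-α/2) * ∑ ω' with Z ω' = Z ω, p ω' := fun ω hω =>
    lt_of_not_ge fun h => absurd ((hV ω).2 h) (by simp [hω])
  exact ⟨le_of_mul_le_mul_left
      ((mul_sum_sup'_heavy_le hp ht.le fun ω => (hV ω).1).trans (hsq ▸ hα)) ht,
    sum_sup'_light_le hp hsum ht.le hlight⟩
end

section
/- Leftover hash lemma (classical version, with side information and events, as used for privacy amplification): Let X be a random variable over a finite set 𝒳 and Z a random variable over 𝒵, and let ℱ be a universal-2 family of hash functions from 𝒳 to {0,1}^ℓ. Let F be uniform over ℱ and independent of (X,Z). Then the statistical distance between the distribution of (F(X), F, Z) and (U, F, Z), where U is uniform on {0,1}^ℓ and independent of (F,Z), is at most (1/2)·2^{−(H_min(X|Z) − ℓ)/2}. -/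
/-!
Fix a value `z` of the side information and write `P x = P[X = x, Z = z]`, `S = ∑ x, P x`.
By Cauchy–Schwarz over the `2^ℓ · |ℱ|` pairs `(b, f)`, the L¹ distance between `(F(X), F)` and
`(U, F)` is at most `√(2^ℓ |ℱ|)` times their L² distance, whose square is the collision mass
`∑ f, ∑ b, P[f X = b]²` minus `|ℱ| S² / 2^ℓ`. Universality bounds the collision mass by
`|ℱ| (∑ x, P x² + S² / 2^ℓ)`, so the L¹ distance is at most `|ℱ| √(2^ℓ ∑ x, P x²)`, and
`∑ x, P x² ≤ (max P) · S`. A second Cauchy–Schwarz, over `z`, yields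
`√(2^ℓ ∑ z, max_x P[X = x, Z = z]) = 2^(-(H_min(X|Z) - ℓ)/2)`.
-/

open Finset

section UniversalHashing

variable {𝒳 ℱ B : Type*}

def IsUniversalTwo [Fintype ℱ] [Fintype B] [DecidableEq B] (hash : ℱ → 𝒳 → B) : Prop :=
  ∀ x x' : 𝒳, x ≠ x' →
    (#{f | hash f x = hash f x'} : ℝ) ≤ (Fintype.card ℱ : ℝ) / Fintype.card B

lemma sum_sq_sum_fiber [Fintype 𝒳] [Fintype B] [DecidableEq B] (h : 𝒳 → B) (P : 𝒳 → ℝ) :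
    ∑ b, (∑ x with h x = b, P x) ^ 2 = ∑ x, P x * ∑ x' with h x' = h x, P x' := by
  rw [← sum_fiberwise univ h (fun x => P x * ∑ x' with h x' = h x, P x')]
  refine sum_congr rfl fun b _ => ?_
  rw [sq, sum_mul]
  refine sum_congr rfl fun x hx => ?_
  rw [(mem_filter.1 hx).2]

lemma sum_sub_inv_card_mul_sum_sq [Fintype B] (g : B → ℝ) :
    ∑ b, (g b - (Fintype.card B : ℝ)⁻¹ * ∑ b, g b) ^ 2
      = ∑ b, g b ^ 2 - (Fintype.card B : ℝ)⁻¹ * (∑ b, g b) ^ 2 := by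
  simp only [sub_sq, sum_add_distrib, sum_sub_distrib, ← sum_mul, ← mul_sum, sum_const,
    card_univ, nsmul_eq_mul]
  rcases eq_or_ne (Fintype.card B : ℝ) 0 with hK | hK
  · simp [hK]
  · field_simp
    ring

lemma IsUniversalTwo.card_collision_le [DecidableEq 𝒳] [Fintype ℱ] [Fintype B] [DecidableEq B]
    {hash : ℱ → 𝒳 → B} (huniv : IsUniversalTwo hash) (x x' : 𝒳) :
    (#{f | hash f x = hash f x'} : ℝ)
      ≤ (if x = x' then (Fintype.card ℱ : ℝ) else 0) + Fintype.card ℱ / Fintype.card B := by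
  split_ifs with hx
  · refine le_add_of_le_of_nonneg ?_ (by positivity)
    exact_mod_cast (card_filter_le _ _).trans_eq card_univ
  · simpa using huniv x x' hx

lemma IsUniversalTwo.sum_sum_sq_sum_fiber_le [Fintype 𝒳] [DecidableEq 𝒳] [Fintype ℱ]
    [Fintype B] [DecidableEq B] {hash : ℱ → 𝒳 → B} (huniv : IsUniversalTwo hash)
    (P : 𝒳 → ℝ) (hP : ∀ x, 0 ≤ P x) :
    ∑ f, ∑ b, (∑ x with hash f x = b, P x) ^ 2
      ≤ Fintype.card ℱ * ∑ x, P x ^ 2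
        + Fintype.card ℱ / Fintype.card B * (∑ x, P x) ^ 2 := by
  set N : ℝ := (Fintype.card ℱ : ℝ)
  set K : ℝ := (Fintype.card B : ℝ)
  have hrow : ∀ x, ∑ f, ∑ x' with hash f x' = hash f x, P x' ≤ N * P x + N / K * ∑ x, P x := by
    intro x
    calc ∑ f, ∑ x' with hash f x' = hash f x, P x'
        = ∑ x', (#{f | hash f x = hash f x'} : ℝ) * P x' := by
          simp only [sum_filter, natCast_card_filter, sum_mul, ite_mul, one_mul, zero_mul,
            eq_comm (a := hash _ x)]
          exact sum_comm
      _ ≤ ∑ x', ((if x = x' then N else 0) + N / K) * P x' :=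
          sum_le_sum fun x' _ => mul_le_mul_of_nonneg_right (huniv.card_collision_le x x') (hP x')
      _ = N * P x + N / K * ∑ x, P x := by
          simp only [add_mul, ite_mul, zero_mul, sum_add_distrib, sum_ite_eq, mem_univ,
            if_true, mul_sum]
  calc ∑ f, ∑ b, (∑ x with hash f x = b, P x) ^ 2
      = ∑ x, P x * ∑ f, ∑ x' with hash f x' = hash f x, P x' := by
        simp only [sum_sq_sum_fiber, mul_sum]
        exact sum_comm
    _ ≤ ∑ x, P x * (N * P x + N / K * ∑ x, P x) :=
        sum_le_sum fun x _ => mul_le_mul_of_nonneg_left (hrow x) (hP x)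
    _ = N * ∑ x, P x ^ 2 + N / K * (∑ x, P x) ^ 2 := by
        simp only [mul_add, sum_add_distrib, ← sum_mul, mul_sum (s := univ) (a := N)]
        congr 1
        · exact sum_congr rfl fun x _ => by ring
        · ring

lemma IsUniversalTwo.sum_sum_abs_sum_fiber_sub_le [Fintype 𝒳] [DecidableEq 𝒳] [Fintype ℱ]
    [Fintype B] [DecidableEq B] {hash : ℱ → 𝒳 → B} (huniv : IsUniversalTwo hash)
    (P : 𝒳 → ℝ) (hP : ∀ x, 0 ≤ P x) :
    ∑ b, ∑ f, |∑ x with hash f x = b, P x - (Fintype.card B : ℝ)⁻¹ * ∑ x, P x|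
      ≤ Fintype.card ℱ * √(Fintype.card B * ∑ x, P x ^ 2) := by
  set N : ℝ := (Fintype.card ℱ : ℝ)
  set K : ℝ := (Fintype.card B : ℝ)
  set D : B → ℱ → ℝ := fun b f => ∑ x with hash f x = b, P x - K⁻¹ * ∑ x, P x
  have hvar : ∑ b, ∑ f, D b f ^ 2 ≤ N * ∑ x, P x ^ 2 := by
    have hfiber : ∀ f, ∑ b, ∑ x with hash f x = b, P x = ∑ x, P x := fun f =>
      sum_fiberwise univ (hash f) P
    calc ∑ b, ∑ f, D b f ^ 2
        = ∑ f, ∑ b, (∑ x with hash f x = b, P x) ^ 2 - N * (K⁻¹ * (∑ x, P x) ^ 2) := by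
          have hrow : ∀ f, ∑ b, D b f ^ 2
              = ∑ b, (∑ x with hash f x = b, P x) ^ 2 - K⁻¹ * (∑ x, P x) ^ 2 := fun f => by
            simpa only [hfiber] using
              sum_sub_inv_card_mul_sum_sq (fun b => ∑ x with hash f x = b, P x)
          rw [sum_comm, sum_congr rfl fun f _ => hrow f, sum_sub_distrib, sum_const, card_univ,
            nsmul_eq_mul]
      _ ≤ N * ∑ x, P x ^ 2 := by
          have := huniv.sum_sum_sq_sum_fiber_le P hP
          rw [div_eq_mul_inv] at this
          linarith
  have hcs : (∑ b, ∑ f, |D b f|) ^ 2 ≤ K * N * ∑ b, ∑ f, D b f ^ 2 := by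
    have := sq_sum_le_card_mul_sum_sq (s := (univ : Finset (B × ℱ))) (f := fun bf => |D bf.1 bf.2|)
    simpa [Fintype.sum_prod_type, sq_abs, Fintype.card_prod] using this
  have hN : 0 ≤ N := Nat.cast_nonneg _
  calc ∑ b, ∑ f, |D b f| ≤ √(N ^ 2 * (K * ∑ x, P x ^ 2)) :=
        Real.le_sqrt_of_sq_le <|
          (hcs.trans (mul_le_mul_of_nonneg_left hvar (by positivity))).trans_eq (by ring)
    _ = N * √(K * ∑ x, P x ^ 2) := by rw [Real.sqrt_mul (by positivity), Real.sqrt_sq hN]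

lemma IsUniversalTwo.sum_sum_sum_abs_sum_fiber_sub_le {𝒵 : Type*} [Fintype 𝒳] [Nonempty 𝒳]
    [DecidableEq 𝒳] [Fintype 𝒵] [Fintype ℱ] [Fintype B] [DecidableEq B]
    {hash : ℱ → 𝒳 → B} (huniv : IsUniversalTwo hash)
    (P : 𝒵 → 𝒳 → ℝ) (hP : ∀ z x, 0 ≤ P z x) (m : 𝒵 → ℝ) (hm : ∀ z x, P z x ≤ m z) :
    ∑ b, ∑ f, ∑ z, |∑ x with hash f x = b, P z x - (Fintype.card B : ℝ)⁻¹ * ∑ x, P z x|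
      ≤ Fintype.card ℱ * √(Fintype.card B * (∑ z, m z) * ∑ z, ∑ x, P z x) := by
  set N : ℝ := (Fintype.card ℱ : ℝ)
  set K : ℝ := (Fintype.card B : ℝ)
  have hm0 : ∀ z, 0 ≤ m z := fun z => (hP z (Classical.arbitrary 𝒳)).trans (hm z _)
  have hcollision : ∀ z, ∑ x, P z x ^ 2 ≤ m z * ∑ x, P z x := fun z => by
    rw [mul_sum]
    exact sum_le_sum fun x _ => by rw [sq]; exact mul_le_mul_of_nonneg_right (hm z x) (hP z x)
  calc ∑ b, ∑ f, ∑ z, |∑ x with hash f x = b, P z x - K⁻¹ * ∑ x, P z x|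
      = ∑ z, ∑ b, ∑ f, |∑ x with hash f x = b, P z x - K⁻¹ * ∑ x, P z x| :=
        (sum_congr rfl fun _ _ => sum_comm).trans sum_comm
    _ ≤ ∑ z, N * √(K * (m z * ∑ x, P z x)) := sum_le_sum fun z _ =>
        (huniv.sum_sum_abs_sum_fiber_sub_le (P z) (hP z)).trans <| by gcongr; exact hcollision z
    _ = N * √K * ∑ z, √(m z) * √(∑ x, P z x) := by
        rw [mul_sum]
        refine sum_congr rfl fun z _ => ?_
        rw [Real.sqrt_mul (by positivity), Real.sqrt_mul (hm0 z)]
        ring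
    _ ≤ N * √K * (√(∑ z, m z) * √(∑ z, ∑ x, P z x)) := by
        gcongr
        exact Real.sum_sqrt_mul_sqrt_le _ hm0 fun z => sum_nonneg fun x _ => hP z x
    _ = N * √(K * (∑ z, m z) * ∑ z, ∑ x, P z x) := by
        have hK : 0 ≤ K := Nat.cast_nonneg _
        rw [Real.sqrt_mul (mul_nonneg hK (sum_nonneg fun z _ => hm0 z)), Real.sqrt_mul hK]
        ring

end UniversalHashing

lemma sum_filter_comp_and_eq_sum_filter {Ω 𝒳 : Type*} [Fintype Ω] [Fintype 𝒳] [DecidableEq 𝒳]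
    (p : Ω → ℝ) (X : Ω → 𝒳) (Q : 𝒳 → Prop) [DecidablePred Q] (r : Ω → Prop) [DecidablePred r] :
    ∑ ω with Q (X ω) ∧ r ω, p ω = ∑ x with Q x, ∑ ω with X ω = x ∧ r ω, p ω := by
  rw [← sum_fiberwise_of_maps_to (t := univ.filter Q) (g := X) (by simp +contextual)]
  refine sum_congr rfl fun x hx => sum_congr ?_ fun _ _ => rfl
  rw [filter_filter]
  refine filter_congr fun ω _ => ?_
  have := (mem_filter.1 hx).2
  constructor
  · rintro ⟨⟨_, hr⟩, rfl⟩; exact ⟨rfl, hr⟩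
  · rintro ⟨rfl, hr⟩; exact ⟨⟨this, hr⟩, rfl⟩

lemma sqrt_two_pow_mul_eq_two_rpow (ℓ : ℕ) {M : ℝ} (hM : 0 < M) :
    √(2 ^ ℓ * M) = (2 : ℝ) ^ (-((-Real.logb 2 M - ℓ) / 2)) := by
  rw [Real.sqrt_eq_rpow, ← Real.rpow_natCast, ← Real.rpow_logb two_pos (by norm_num) hM,
    ← Real.rpow_add two_pos, ← Real.rpow_mul two_pos.le, Real.logb_rpow two_pos (by norm_num)]
  ring_nf

theorem leftover_hash_lemma_general
    {Ω 𝒳 𝒵 ℱ : Type*} [Fintype Ω] [Fintype 𝒳] [Fintype 𝒵] [Fintype ℱ]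
    [Nonempty 𝒳] [DecidableEq 𝒳] [DecidableEq 𝒵]
    (ℓ : ℕ)
    (p : Ω → ℝ) (hp : ∀ ω, 0 ≤ p ω) (hsum : ∑ ω, p ω = 1)
    (X : Ω → 𝒳) (Z : Ω → 𝒵)
    (hash : ℱ → 𝒳 → (Fin ℓ → Bool))
    (huniv2 : ∀ x x' : 𝒳, x ≠ x' →
      (((univ : Finset ℱ).filter (fun f => hash f x = hash f x')).card : ℝ)
        ≤ (Fintype.card ℱ : ℝ) / 2 ^ ℓ) :
    (1 / 2) * ∑ b : Fin ℓ → Bool, ∑ f : ℱ, ∑ z : 𝒵,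
        |(∑ ω ∈ univ.filter (fun ω => hash f (X ω) = b ∧ Z ω = z), p ω)
              / (Fintype.card ℱ : ℝ)
          - (1 / 2 ^ ℓ) * (∑ ω ∈ univ.filter (fun ω => Z ω = z), p ω)
              / (Fintype.card ℱ : ℝ)|
      ≤ (1 / 2) * (2:ℝ) ^
          (-(((- Real.logb 2 (∑ z, (univ : Finset 𝒳).sup' univ_nonempty (fun x =>
                ∑ ω ∈ univ.filter (fun ω => X ω = x ∧ Z ω = z), p ω))) - ℓ) / 2)) := by
  have hK : (Fintype.card (Fin ℓ → Bool) : ℝ) = 2 ^ ℓ := by simp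
  have huniv : IsUniversalTwo hash := by rw [IsUniversalTwo, hK]; exact huniv2
  set P : 𝒵 → 𝒳 → ℝ := fun z x => ∑ ω with X ω = x ∧ Z ω = z, p ω
  set M := ∑ z, (univ : Finset 𝒳).sup' univ_nonempty (P z)
  have hjoint : ∀ f b z, ∑ ω with hash f (X ω) = b ∧ Z ω = z, p ω
      = ∑ x with hash f x = b, P z x := fun f b z =>
    sum_filter_comp_and_eq_sum_filter p X (hash f · = b) (Z · = z)
  have hmarg : ∀ z, ∑ ω with Z ω = z, p ω = ∑ x, P z x := fun z => by
    simpa using sum_filter_comp_and_eq_sum_filter p X (fun _ => True) (Z · = z)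
  have htotal : ∑ z, ∑ x, P z x = 1 := by simp only [← hmarg, sum_fiberwise, hsum]
  have hmax : ∀ z x, P z x ≤ (univ : Finset 𝒳).sup' univ_nonempty (P z) := fun z x =>
    le_sup' (P z) (mem_univ x)
  have hM : 0 < M := by
    have hle : ∑ z, ∑ x, P z x ≤ Fintype.card 𝒳 * M := by
      rw [mul_sum]
      exact sum_le_sum fun z _ => (sum_le_sum fun x _ => hmax z x).trans_eq (by simp)
    exact pos_of_mul_pos_right (htotal ▸ hle |>.trans_lt' one_pos) (Nat.cast_nonneg _)
  have key := huniv.sum_sum_sum_abs_sum_fiber_sub_le P (fun z x => sum_nonneg fun ω _ => hp ω) _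
    hmax
  rw [hK, htotal, mul_one, inv_eq_one_div] at key
  simp only [hjoint, hmarg, div_sub_div_same, abs_div, Nat.abs_cast, ← sum_div]
  rw [← sqrt_two_pow_mul_eq_two_rpow ℓ hM]
  gcongr
  exact div_le_of_le_mul₀ (Nat.cast_nonneg _) (Real.sqrt_nonneg _) (key.trans_eq (mul_comm _ _))

/-- Leftover hash lemma (classical, with side information): if `ℱ` is a universal-2
family of hash functions `𝒳 → {0,1}^ℓ` and `F` is uniform over `ℱ` and independent of
`(X, Z)` (modeled by the product probability space `Ω × ℱ`), then the distribution of
`(F(X), F, Z)` is within statistical distance `(1/2)·2^{-(H_min(X|Z) - ℓ)/2}` of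
`(U, F, Z)` with `U` uniform on `{0,1}^ℓ`. -/
theorem leftover_hash_lemma
    {Ω 𝒳 𝒵 ℱ : Type*} [Fintype Ω] [Fintype 𝒳] [Fintype 𝒵] [Fintype ℱ]
    [Nonempty 𝒳] [Nonempty ℱ] [DecidableEq 𝒳] [DecidableEq 𝒵]
    (ℓ : ℕ)
    (p : Ω → ℝ) (hp : ∀ ω, 0 ≤ p ω) (hsum : ∑ ω, p ω = 1)
    (X : Ω → 𝒳) (Z : Ω → 𝒵)
    (hash : ℱ → 𝒳 → (Fin ℓ → Bool))
    (huniv2 : ∀ x x' : 𝒳, x ≠ x' →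
      (((univ : Finset ℱ).filter (fun f => hash f x = hash f x')).card : ℝ)
        ≤ (Fintype.card ℱ : ℝ) / 2 ^ ℓ) :
    (1 / 2) * ∑ b : Fin ℓ → Bool, ∑ f : ℱ, ∑ z : 𝒵,
        |(∑ ω ∈ univ.filter (fun ω => hash f (X ω) = b ∧ Z ω = z), p ω)
              / (Fintype.card ℱ : ℝ)
          - (1 / 2 ^ ℓ) * (∑ ω ∈ univ.filter (fun ω => Z ω = z), p ω)
              / (Fintype.card ℱ : ℝ)|
      ≤ (1 / 2) * (2:ℝ) ^
          (-(((- Real.logb 2 (∑ z, (univ : Finset 𝒳).sup' univ_nonempty (fun x =>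
                ∑ ω ∈ univ.filter (fun ω => X ω = x ∧ Z ω = z), p ω))) - ℓ) / 2)) :=
  leftover_hash_lemma_general ℓ p hp hsum X Z hash huniv2
end
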